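/- arXiv:1307.0481 — 4 statements merged into one kernel-verified Lean document; each statement's English description precedes it below -/
import Mathlib

section
/- Fix an index α ∈ {1,…,g} and characteristics p, q ∈ ℂ^g with θ[p,q](0) ≠ 0. Then the map w ↦ θ̃[p,q'], where q' is q with its α-th entry replaced by w, is complex differentiable at w = q_α, and its derivative equals θ̃[p,q] · ( −πi·p_α + (∂θ[p,q]/∂z_α)(0) / θ[p,q](0) ). (This is the second variational formula of the paper's Lemma on derivatives of the modified theta constant: ∂/∂q_α log θ̃[p,q](0) = −πi p_α + ∮_{a_α} w, where the a-period of w = Σ_β ∂_β log θ[p,q](0) u_β equals ∂_α log θ[p,q](0).) -/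
/-- The genus `g` theta function with characteristics `p, q ∈ ℂ^g`:
`θ[p,q](z) = Σ_{m ∈ ℤ^g} exp(πi⟨Ω(m+p), m+p⟩ + 2πi⟨m+p, z+q⟩)`,
where `⟨u,v⟩ = Σ_j u_j v_j`. -/
noncomputable def ThetaG (g : ℕ) (Ω : Matrix (Fin g) (Fin g) ℂ)
    (p q z : Fin g → ℂ) : ℂ :=
  ∑' m : Fin g → ℤ,
    Complex.exp ((Real.pi : ℂ) * Complex.I *
        (∑ i, (∑ j, Ω i j * ((m j : ℂ) + p j)) * ((m i : ℂ) + p i)) +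
      2 * (Real.pi : ℂ) * Complex.I * (∑ j, ((m j : ℂ) + p j) * (z j + q j)))

/-- The modified theta constant `θ̃[p,q] = exp(−πi⟨p,q⟩)·θ[p,q](0)`. -/
noncomputable def ThetaTildeG (g : ℕ) (Ω : Matrix (Fin g) (Fin g) ℂ)
    (p q : Fin g → ℂ) : ℂ :=
  Complex.exp (-(Real.pi : ℂ) * Complex.I * (∑ j, p j * q j)) * ThetaG g Ω p q 0

/-! Since `θ[p,q](z)` depends on `z + q` only, `θ[p, q + (w - q_α) e_α](0) = θ[p,q]((w - q_α) e_α)`,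
and `⟨p, q + (w - q_α) e_α⟩ = ⟨p, q⟩ + p_α (w - q_α)`; the formula is then the product rule.
The analytic input is that `t ↦ θ[p,q](f t)` is holomorphic for holomorphic `f`: writing the
exponent as a polynomial in `m`, on a compact set its terms are dominated by
`C exp(-π mᵀ (Im Ω) m + L ∑ |m_i|)`, which is summable because `Im Ω` is positive definite,
so Weierstrass' theorem on locally uniform limits applies. -/

open Finset Matrix Complex Real

theorem summable_prod_apply_of_nonneg {ι κ : Type*} [Fintype ι] {f : ι → κ → ℝ}
    (hf : ∀ i, 0 ≤ f i) (hs : ∀ i, Summable (f i)) :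
    Summable fun m : ι → κ => ∏ i, f i (m i) := by
  classical
  refine summable_of_sum_le (c := ∏ i, ∑' k, f i k)
    (fun m => prod_nonneg fun i _ => hf i (m i)) fun s => ?_
  calc ∑ m ∈ s, ∏ i, f i (m i)
      ≤ ∑ m ∈ Fintype.piFinset fun i => s.image (· i), ∏ i, f i (m i) :=
        sum_le_sum_of_subset_of_nonneg
          (fun m hm => Fintype.mem_piFinset.2 fun i => mem_image_of_mem _ hm)
          fun m _ _ => prod_nonneg fun i _ => hf i (m i)
    _ = ∏ i, ∑ k ∈ s.image (· i), f i k := (prod_univ_sum _ _).symm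
    _ ≤ ∏ i, ∑' k, f i k := prod_le_prod (fun i _ => sum_nonneg fun k _ => hf i k)
        fun i _ => (hs i).sum_le_tsum _ fun k _ => hf i k

theorem summable_exp_neg_sq_add_abs {C : ℝ} (hC : 0 < C) (L : ℝ) :
    Summable fun k : ℤ => Real.exp (-(k : ℝ) ^ 2 / C + L * |(k : ℝ)|) := by
  convert summable_pow_mul_jacobiTheta₂_term_bound (L / (2 * Real.pi)) (T := 1 / (Real.pi * C))
    (by positivity) 0 using 2 with k
  rw [pow_zero, one_mul]
  congr 1
  field_simp
  rw [Int.cast_abs]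
  ring

section

variable {n : Type*} [Fintype n]

theorem Matrix.PosDef.exists_dotProduct_self_le {Y : Matrix n n ℝ} (hY : Y.PosDef) :
    ∃ C > 0, ∀ x : n → ℝ, x ⬝ᵥ x ≤ C * (x ⬝ᵥ Y *ᵥ x) := by
  have hpos : ∀ x : n → ℝ, x ≠ 0 → 0 < x ⬝ᵥ Y *ᵥ x := fun x hx => by
    simpa using hY.dotProduct_mulVec_pos hx
  -- the quotient is invariant under scaling, so its bound on the unit sphere holds everywhere
  obtain ⟨C, hC⟩ := (isCompact_sphere (0 : n → ℝ) 1).exists_bound_of_continuousOn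
    (f := fun x => (x ⬝ᵥ x) / (x ⬝ᵥ Y *ᵥ x)) <| by
      refine ContinuousOn.div (by fun_prop) (by fun_prop) fun x hx => (hpos x ?_).ne'
      rintro rfl
      simp at hx
  refine ⟨max C 1, by positivity, fun x => ?_⟩
  rcases eq_or_ne x 0 with rfl | hx
  · simp
  have hr : ‖x‖⁻¹ ≠ 0 := inv_ne_zero (norm_ne_zero_iff.2 hx)
  have hu : ‖x‖⁻¹ • x ∈ Metric.sphere (0 : n → ℝ) 1 := by
    simp [norm_smul, hx]
  have hquot : (x ⬝ᵥ x) / (x ⬝ᵥ Y *ᵥ x) ≤ C := by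
    have := (le_abs_self _).trans ((Real.norm_eq_abs _).symm.trans_le (hC _ hu))
    simpa only [mulVec_smul, smul_dotProduct, dotProduct_smul, smul_eq_mul, ← mul_assoc,
      mul_div_mul_left _ _ (mul_ne_zero hr hr)] using this
  rw [div_le_iff₀ (hpos x hx)] at hquot
  exact hquot.trans (mul_le_mul_of_nonneg_right (le_max_left _ _) (hpos x hx).le)

theorem summable_exp_neg_dotProduct_mulVec {Y : Matrix n n ℝ} (hY : Y.PosDef) (L : ℝ) :
    Summable fun m : n → ℤ =>
      Real.exp (-((fun i => (m i : ℝ)) ⬝ᵥ Y *ᵥ fun i => (m i : ℝ)) + L * ∑ i, |(m i : ℝ)|) := by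
  obtain ⟨C, hC, hle⟩ := hY.exists_dotProduct_self_le
  refine (summable_prod_apply_of_nonneg (fun _ _ => (Real.exp_pos _).le)
    fun _ => summable_exp_neg_sq_add_abs hC L).of_nonneg_of_le (fun _ => (Real.exp_pos _).le)
    fun m => ?_
  rw [← Real.exp_sum, Real.exp_le_exp, sum_add_distrib, ← mul_sum, ← sum_div, sum_neg_distrib,
    neg_div]
  have hq : (∑ i, (m i : ℝ) ^ 2) / C ≤ (fun i => (m i : ℝ)) ⬝ᵥ Y *ᵥ fun i => (m i : ℝ) := by
    rw [div_le_iff₀' hC]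
    simpa only [dotProduct, ← sq] using hle fun i => (m i : ℝ)
  linarith

theorem norm_dotProduct_le {R : Type*} [SeminormedRing R] (u v : n → R) :
    ‖u ⬝ᵥ v‖ ≤ (∑ i, ‖u i‖) * ‖v‖ := by
  rw [sum_mul]
  exact (norm_sum_le _ _).trans <| sum_le_sum fun i _ =>
    (norm_mul_le _ _).trans (mul_le_mul_of_nonneg_left (norm_le_pi_norm v i) (norm_nonneg _))

theorem im_mulVec_ofReal_dotProduct (A : Matrix n n ℂ) (x : n → ℝ) :
    ((A *ᵥ fun i => (x i : ℂ)) ⬝ᵥ fun i => (x i : ℂ)).im = x ⬝ᵥ A.map im *ᵥ x := by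
  simp [dotProduct, mulVec, Complex.im_sum, mul_sum, mul_comm, mul_left_comm]

noncomputable def thetaExponent (Ω : Matrix n n ℂ) (p w : n → ℂ) (m : n → ℤ) : ℂ :=
  π * I * ((Ω *ᵥ fun j => (m j : ℂ) + p j) ⬝ᵥ fun j => (m j : ℂ) + p j) +
    2 * π * I * ((fun j => (m j : ℂ) + p j) ⬝ᵥ w)

noncomputable def thetaExponentLin (Ω : Matrix n n ℂ) (p w : n → ℂ) : n → ℂ :=
  (π * I) • (Ω *ᵥ p + Ωᵀ *ᵥ p) + (2 * π * I) • w

noncomputable def thetaExponentConst (Ω : Matrix n n ℂ) (p w : n → ℂ) : ℂ :=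
  π * I * ((Ω *ᵥ p) ⬝ᵥ p) + 2 * π * I * (p ⬝ᵥ w)

theorem thetaExponent_eq (Ω : Matrix n n ℂ) (p w : n → ℂ) (m : n → ℤ) :
    thetaExponent Ω p w m = π * I * ((Ω *ᵥ fun j => (m j : ℂ)) ⬝ᵥ fun j => (m j : ℂ)) +
      (fun j => (m j : ℂ)) ⬝ᵥ thetaExponentLin Ω p w + thetaExponentConst Ω p w := by
  set a : n → ℂ := fun j => (m j : ℂ)
  have hx : (fun j => (m j : ℂ) + p j) = a + p := rfl
  rw [thetaExponent, thetaExponentLin, thetaExponentConst, hx]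
  simp only [mulVec_add, add_dotProduct, dotProduct_add, dotProduct_smul, smul_eq_mul,
    mulVec_transpose, dotProduct_comm (Ω *ᵥ a) p, dotProduct_mulVec p Ω a,
    dotProduct_comm (p ᵥ* Ω) a, dotProduct_comm (Ω *ᵥ p) a]
  ring

theorem re_thetaExponent_le (Ω : Matrix n n ℂ) (p w : n → ℂ) (m : n → ℤ) :
    (thetaExponent Ω p w m).re ≤
      -((fun i => (m i : ℝ)) ⬝ᵥ (π • Ω.map im) *ᵥ fun i => (m i : ℝ)) +
        ‖thetaExponentLin Ω p w‖ * ∑ i, |(m i : ℝ)| + ‖thetaExponentConst Ω p w‖ := by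
  have hquad : (π * I * ((Ω *ᵥ fun j => (m j : ℂ)) ⬝ᵥ fun j => (m j : ℂ))).re =
      -((fun i => (m i : ℝ)) ⬝ᵥ (π • Ω.map im) *ᵥ fun i => (m i : ℝ)) := by
    have := im_mulVec_ofReal_dotProduct Ω fun i => (m i : ℝ)
    simp only [ofReal_intCast] at this
    simp [this, smul_mulVec]
  have hlin : ((fun j => (m j : ℂ)) ⬝ᵥ thetaExponentLin Ω p w).re ≤
      ‖thetaExponentLin Ω p w‖ * ∑ i, |(m i : ℝ)| := by
    refine (re_le_norm _).trans ((norm_dotProduct_le _ _).trans_eq ?_)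
    simp [mul_comm]
  rw [thetaExponent_eq, add_re, add_re, hquad]
  linarith [re_le_norm (thetaExponentConst Ω p w)]

end

theorem thetaG_eq_tsum_exp_thetaExponent (g : ℕ) (Ω : Matrix (Fin g) (Fin g) ℂ)
    (p q z : Fin g → ℂ) :
    ThetaG g Ω p q z = ∑' m, exp (thetaExponent Ω p (z + q) m) := rfl

theorem thetaG_eq_of_add_eq {g : ℕ} {Ω : Matrix (Fin g) (Fin g) ℂ} {p q q' z z' : Fin g → ℂ}
    (h : z + q = z' + q') : ThetaG g Ω p q z = ThetaG g Ω p q' z' := by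
  rw [thetaG_eq_tsum_exp_thetaExponent, thetaG_eq_tsum_exp_thetaExponent, h]

theorem differentiable_thetaG_comp {g : ℕ} {Ω : Matrix (Fin g) (Fin g) ℂ}
    (hpos : (Ω.map im).PosDef) (p q : Fin g → ℂ) {f : ℂ → Fin g → ℂ} (hf : Differentiable ℂ f) :
    Differentiable ℂ fun t => ThetaG g Ω p q (f t) := by
  intro t₀
  have hw : Continuous fun t => f t + q := hf.continuous.add continuous_const
  obtain ⟨L, hL⟩ := (isCompact_closedBall t₀ 1).exists_bound_of_continuousOn
    (f := fun t => thetaExponentLin Ω p (f t + q))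
    (by unfold thetaExponentLin; fun_prop : Continuous _).continuousOn
  obtain ⟨K, hK⟩ := (isCompact_closedBall t₀ 1).exists_bound_of_continuousOn
    (f := fun t => thetaExponentConst Ω p (f t + q))
    (continuous_const.add (continuous_const.mul (continuous_const.dotProduct hw)) :
      Continuous _).continuousOn
  have hterm : ∀ m, Differentiable ℂ fun t => exp (thetaExponent Ω p (f t + q) m) := by
    intro m
    unfold thetaExponent
    simp only [dotProduct]
    fun_prop
  refine (differentiableOn_tsum_of_summable_norm
    ((summable_exp_neg_dotProduct_mulVec (hpos.smul pi_pos) L).mul_left (Real.exp K))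
    (fun m => (hterm m).differentiableOn) Metric.isOpen_ball fun m t ht => ?_).differentiableAt
    (Metric.ball_mem_nhds t₀ one_pos)
  have ht' := Metric.ball_subset_closedBall ht
  rw [norm_exp, ← Real.exp_add, Real.exp_le_exp]
  have hlin : ‖thetaExponentLin Ω p (f t + q)‖ * ∑ i, |(m i : ℝ)| ≤ L * ∑ i, |(m i : ℝ)| :=
    mul_le_mul_of_nonneg_right (hL t ht') (sum_nonneg fun i _ => abs_nonneg _)
  linarith [re_thetaExponent_le Ω p (f t + q) m, hK t ht']

theorem thetaTilde_deriv_q_general (g : ℕ)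
    (Ω : Matrix (Fin g) (Fin g) ℂ)
    (hpos : (Ω.map Complex.im).PosDef)
    (p q : Fin g → ℂ) (hθ : ThetaG g Ω p q 0 ≠ 0) (α : Fin g) :
    HasDerivAt (fun w : ℂ => ThetaTildeG g Ω p (Function.update q α w))
      (ThetaTildeG g Ω p q *
        (-(Real.pi : ℂ) * Complex.I * p α +
          deriv (fun w : ℂ => ThetaG g Ω p q (Function.update (0 : Fin g → ℂ) α w)) 0 /
            ThetaG g Ω p q 0))
      (q α) := by
  set F : ℂ → ℂ := fun t => ThetaG g Ω p q (Function.update 0 α t)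
  have hF : HasDerivAt F (deriv F 0) (q α - q α) := by
    rw [sub_self]
    exact (differentiable_thetaG_comp hpos p q fun t =>
      (hasDerivAt_update 0 α t).differentiableAt).differentiableAt.hasDerivAt
  have hshift (w : ℂ) : ThetaG g Ω p (Function.update q α w) 0 = F (w - q α) :=
    thetaG_eq_of_add_eq <| by
      ext j
      rcases eq_or_ne j α with rfl | hj <;> simp [*]
  have hphase : HasDerivAt (fun w => -(π : ℂ) * I * ∑ j, p j * Function.update q α w j)
      (-(π : ℂ) * I * p α) (q α) := by
    have := HasDerivAt.fun_sum (u := univ) fun j _ =>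
      (hasDerivAt_pi.1 (hasDerivAt_update q α (q α)) j).const_mul (p j)
    simpa [Pi.single_apply] using this.const_mul (-(π : ℂ) * I)
  have hfun : (fun w => ThetaTildeG g Ω p (Function.update q α w)) =
      fun w => exp (-(π : ℂ) * I * ∑ j, p j * Function.update q α w j) * F (w - q α) := by
    funext w
    rw [ThetaTildeG, hshift]
  rw [hfun]
  refine (hphase.cexp.mul (hF.comp_sub_const (q α) (q α))).congr_deriv ?_
  have hF0 : F 0 = ThetaG g Ω p q 0 := by simp only [F, Function.update_zero]
  rw [Function.update_eq_self, sub_self, hF0, ThetaTildeG]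
  field_simp

/-- Second variational formula for the modified theta constant:
`∂/∂q_α log θ̃[p,q](0) = −πi p_α + ∂_α log θ[p,q](0)`. -/
theorem thetaTilde_deriv_q (g : ℕ) (hg : 1 ≤ g)
    (Ω : Matrix (Fin g) (Fin g) ℂ) (hsym : Ω.IsSymm)
    (hpos : (Ω.map Complex.im).PosDef)
    (p q : Fin g → ℂ) (hθ : ThetaG g Ω p q 0 ≠ 0) (α : Fin g) :
    HasDerivAt (fun w : ℂ => ThetaTildeG g Ω p (Function.update q α w))
      (ThetaTildeG g Ω p q *
        (-(Real.pi : ℂ) * Complex.I * p α +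
          deriv (fun w : ℂ => ThetaG g Ω p q (Function.update (0 : Fin g → ℂ) α w)) 0 /
            ThetaG g Ω p q 0))
      (q α) :=
  thetaTilde_deriv_q_general g Ω hpos p q hθ α
end

section
/- Let r ∈ ℂ \ {0}, let f be meromorphic near 0 ∈ ℂ with a simple pole at 0 of residue r (i.e. f(z) − r/z extends holomorphically across 0), and let 𝔤 be holomorphic near 0. Then z · Q(z) → −1/(12r) as z → 0, where Q = (𝔤 − S_f)/(6f). That is, at a simple pole of the differential v with residue r, the differential Q_v has a simple pole with residue −1/(12r). -/
/-! Write `f = r/z + h` near `0` with `h` holomorphic. Then `f' = -r/z² + h'` and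
`f'' = 2r/z³ + h''`, and after clearing the powers of `z`, `z · Q(z)` becomes a rational
expression in `z, h, h', h'', 𝔤` whose denominator is a power of `z f(z) = r + z h(z)`.
It is continuous at `0`, where the `z²𝔤` term drops out and `z² S_f → 1/2`,
giving `(0 - 1/2) / (6r) = -1/(12r)`. -/

open Filter Topology Set

section LaurentDerivatives

variable {𝕜 : Type*} [NontriviallyNormedField 𝕜] {h : 𝕜 → 𝕜} {h' z : 𝕜}

theorem hasDerivAt_div_add (r : 𝕜) (hz : z ≠ 0) (hh : HasDerivAt h h' z) :
    HasDerivAt (fun w => r / w + h w) (-r / z ^ 2 + h') z := by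
  rw [neg_div, div_eq_mul_inv, ← mul_neg]
  simpa only [div_eq_mul_inv] using ((hasDerivAt_inv hz).const_mul r).fun_add hh

theorem hasDerivAt_neg_div_sq_add (r : 𝕜) (hz : z ≠ 0) (hh : HasDerivAt h h' z) :
    HasDerivAt (fun w => -r / w ^ 2 + h w) (2 * r / z ^ 3 + h') z := by
  simp only [div_eq_mul_inv]
  refine ((((hasDerivAt_pow 2 z).fun_inv (pow_ne_zero 2 hz)).const_mul (-r)).fun_add
    hh).congr_deriv ?_
  push_cast
  field_simp

end LaurentDerivatives

/-- `z · Q(z)` for `f = r/z + a₀`, `f' = -r/z² + a₁`, `f'' = 2r/z³ + a₂` and `𝔤 = G`,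
with numerator and denominator multiplied by powers of `z`. -/
noncomputable def regularizedQv (r a₀ a₁ a₂ G z : ℂ) : ℂ :=
  (z ^ 2 * G - ((2 * r + z ^ 3 * a₂) * (r + z * a₀) - 3 / 2 * (-r + z ^ 2 * a₁) ^ 2) /
    (r + z * a₀) ^ 2) / (6 * (r + z * a₀))

theorem mul_Qv_eq_regularizedQv {r a₀ a₁ a₂ G z : ℂ} (hz : z ≠ 0) (hc : r + z * a₀ ≠ 0) :
    z * ((G - ((2 * r / z ^ 3 + a₂) / (r / z + a₀) -
        3 / 2 * ((-r / z ^ 2 + a₁) / (r / z + a₀)) ^ 2)) / (6 * (r / z + a₀))) =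
      regularizedQv r a₀ a₁ a₂ G z := by
  have hf : r / z + a₀ = (r + z * a₀) / z := by field_simp
  rw [hf, regularizedQv]
  field_simp

theorem regularizedQv_zero {r : ℂ} (hr : r ≠ 0) (a₀ a₁ a₂ G : ℂ) :
    regularizedQv r a₀ a₁ a₂ G 0 = -1 / (12 * r) := by
  simp only [regularizedQv]
  norm_num
  field_simp
  ring

theorem ContinuousAt.regularizedQv {r z₀ : ℂ} {a₀ a₁ a₂ G : ℂ → ℂ}
    (h₀ : ContinuousAt a₀ z₀) (h₁ : ContinuousAt a₁ z₀) (h₂ : ContinuousAt a₂ z₀)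
    (hG : ContinuousAt G z₀) (hc : r + z₀ * a₀ z₀ ≠ 0) :
    ContinuousAt (fun z => regularizedQv r (a₀ z) (a₁ z) (a₂ z) (G z) z) z₀ := by
  have hden : ContinuousAt (fun z => r + z * a₀ z) z₀ := by fun_prop
  have hnum : ContinuousAt (fun z => (2 * r + z ^ 3 * a₂ z) * (r + z * a₀ z) -
      3 / 2 * (-r + z ^ 2 * a₁ z) ^ 2) z₀ := by fun_prop
  have hG2 : ContinuousAt (fun z => z ^ 2 * G z) z₀ := by fun_prop
  exact (hG2.sub (hnum.div (hden.pow 2) (pow_ne_zero 2 hc))).div (hden.const_mul 6)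
    (mul_ne_zero (by norm_num) hc)

/-- Local behaviour of the differential `Q_v = (S_B − S_v)/(6v)` at a simple pole
of `v = f dz` with residue `r` (i.e. `f(z) − r/z` extends holomorphically across `0`):
one has `z·Q(z) → −1/(12r)` as `z → 0`, i.e. `Q_v` has a simple pole of residue
`−1/(12r)`. Here `Q = (𝔤 − S_f)/(6f)`, `S_f = f''/f − (3/2)(f'/f)²`, and the
holomorphic function `𝔤` represents the Bergman projective connection. -/
theorem Qv_simple_pole_residue (r : ℂ) (hr : r ≠ 0) (f 𝔤 : ℂ → ℂ)
    (U : Set ℂ) (hU : IsOpen U) (h0U : (0:ℂ) ∈ U)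
    (h : ℂ → ℂ) (hh : DifferentiableOn ℂ h U)
    (hf : ∀ z ∈ U \ {(0:ℂ)}, f z = r / z + h z)
    (V : Set ℂ) (hV : IsOpen V) (h0V : (0:ℂ) ∈ V)
    (h𝔤 : DifferentiableOn ℂ 𝔤 V) :
    Filter.Tendsto
      (fun z : ℂ => z *
        ((𝔤 z - (deriv (deriv f) z / f z - (3/2) * (deriv f z / f z) ^ 2)) /
          (6 * f z)))
      (nhdsWithin 0 {(0:ℂ)}ᶜ)
      (nhds (-1 / (12 * r))) := by
  have hW : IsOpen (U \ {0}) := hU.sdiff isClosed_singleton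
  have han : AnalyticOnNhd ℂ h U := hh.analyticOnNhd hU
  have hf' : EqOn (deriv f) (fun z => -r / z ^ 2 + deriv h z) (U \ {0}) := fun z hz =>
    (EqOn.deriv hf hW hz).trans
      (hasDerivAt_div_add r hz.2 (han z hz.1).differentiableAt.hasDerivAt).deriv
  have hf'' : EqOn (deriv (deriv f)) (fun z => 2 * r / z ^ 3 + deriv (deriv h) z) (U \ {0}) :=
    fun z hz => (EqOn.deriv hf' hW hz).trans
      (hasDerivAt_neg_div_sq_add r hz.2 (han.deriv z hz.1).differentiableAt.hasDerivAt).deriv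
  have hh0 : ContinuousAt h 0 := (han 0 h0U).continuousAt
  have hc0 : r + 0 * h 0 ≠ 0 := by simpa using hr
  have hcont : ContinuousAt (fun z => regularizedQv r (h z) (deriv h z) (deriv (deriv h) z)
      (𝔤 z) z) 0 :=
    .regularizedQv hh0 (han.deriv 0 h0U).continuousAt (han.deriv.deriv 0 h0U).continuousAt
      (h𝔤.differentiableAt (hV.mem_nhds h0V)).continuousAt hc0
  have hlim := hcont.tendsto.mono_left (nhdsWithin_le_nhds (s := {0}ᶜ))
  rw [regularizedQv_zero hr] at hlim
  refine hlim.congr' ?_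
  have hc : ∀ᶠ z in 𝓝 0, r + z * h z ≠ 0 :=
    (continuousAt_const.add (continuousAt_id.mul hh0)).eventually_ne hc0
  filter_upwards [nhdsWithin_le_nhds hc, nhdsWithin_le_nhds (hU.mem_nhds h0U),
    self_mem_nhdsWithin] with z hcz hzU hz0
  rw [hf z ⟨hzU, hz0⟩, hf' ⟨hzU, hz0⟩, hf'' ⟨hzU, hz0⟩, mul_Qv_eq_regularizedQv hz0 hcz]
end

section
/- Assume additionally ζ ∉ { p/q, q/p, −pq, −1/(pq) }. Then the following rational identity holds: 2q²/ζ + ((q²−p²)/(1+p²)) · ( −ζ⁻²/(ζ⁻¹ − p/q) − 1/(ζ − p/q) ) + ((p²q² − 1)/(1+p²)) · ( −ζ⁻²/(ζ⁻¹ + 1/(pq)) − 1/(ζ + 1/(pq)) ) = − p²(q²+1)·(ζ − ζ⁻¹)² / ( ζ·(ζ − p/q)(ζ⁻¹ − p/q)(ζ + pq)(ζ⁻¹ + pq) ). (The left-hand side is the ζ-derivative of the homological coordinate z1 = ∫_{x1}^{x2} v, computed from z1 = 2q² log ζ + ((q²−p²)/(1+p²)) log((ζ⁻¹−p/q)/(ζ−p/q))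 + ((p²q²−1)/(1+p²)) log((ζ⁻¹+1/(pq))/(ζ+1/(pq))); this is the paper's formula for dz1/dζ.) -/
/-!
Each bracket on the left is `d/dζ log((ζ⁻¹ - a)/(ζ - a))` for `a = p/q` resp. `a = -1/(pq)`,
a rational function with simple poles at `0`, `a`, `a⁻¹`. Writing `a = u/v` and clearing
`ζ⁻¹` turns both brackets and the right-hand side into quotients of polynomials with the
same linear factors `ζ`, `ζv - u`, `v - ζu`, after which the identity is a polynomial one.
-/

section

variable {K : Type*} [Field K] {u v w ζ : K}

lemma mul_sub_ne_zero_of_ne_div (hv : v ≠ 0) (h : ζ ≠ u / v) : ζ * v - u ≠ 0 :=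
  fun h' => h ((eq_div_iff hv).2 (sub_eq_zero.1 h'))

lemma sub_mul_ne_zero_of_ne_div (hu : u ≠ 0) (h : ζ ≠ v / u) : v - ζ * u ≠ 0 :=
  fun h' => h ((eq_div_iff hu).2 (sub_eq_zero.1 h').symm)

theorem neg_inv_sq_div_inv_sub_div_sub_one_div_sub_div (hu : u ≠ 0) (hv : v ≠ 0)
    (hζ : ζ ≠ 0) (h₁ : ζ ≠ u / v) (h₂ : ζ ≠ v / u) :
    -(ζ ^ 2)⁻¹ / (ζ⁻¹ - u / v) - 1 / (ζ - u / v) =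
      v * (u * ζ ^ 2 - 2 * v * ζ + u) / (ζ * (v - ζ * u) * (ζ * v - u)) := by
  have := mul_sub_ne_zero_of_ne_div hv h₁
  have := sub_mul_ne_zero_of_ne_div hu h₂
  field_simp
  ring

theorem mul_sub_inv_sq_div_eq_mul_sq_sub_one_sq_div (c : K) (hv : v ≠ 0) (hζ : ζ ≠ 0) :
    c * (ζ - ζ⁻¹) ^ 2 / (ζ * (ζ - u / v) * (ζ⁻¹ - u / v) * (ζ + w) * (ζ⁻¹ + w)) =
      c * (ζ ^ 2 - 1) ^ 2 * v ^ 2 / (ζ * (ζ * v - u) * (v - ζ * u) * (w + ζ) * (ζ * w + 1)) := by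
  have hden : ζ * (ζ - u / v) * (ζ⁻¹ - u / v) * (ζ + w) * (ζ⁻¹ + w) =
      (ζ * v - u) * (v - ζ * u) * (w + ζ) * (ζ * w + 1) / (v ^ 2 * ζ) := by
    field_simp
    ring
  rw [hden, div_div_eq_mul_div]
  field_simp

end

theorem dz1_dzeta_general (p q ζ : ℂ) (hp : p ≠ 0) (hq : q ≠ 0)
    (hp2 : p ^ 2 ≠ -1) (hζ : ζ ≠ 0)
    (h1 : ζ ≠ p / q) (h2 : ζ ≠ q / p) (h3 : ζ ≠ -(p * q)) (h4 : ζ ≠ -(1 / (p * q))) :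
    2 * q ^ 2 / ζ +
      ((q ^ 2 - p ^ 2) / (1 + p ^ 2)) *
        (-(ζ ^ 2)⁻¹ / (ζ⁻¹ - p / q) - 1 / (ζ - p / q)) +
      ((p ^ 2 * q ^ 2 - 1) / (1 + p ^ 2)) *
        (-(ζ ^ 2)⁻¹ / (ζ⁻¹ + 1 / (p * q)) - 1 / (ζ + 1 / (p * q))) =
    -(p ^ 2 * (q ^ 2 + 1) * (ζ - ζ⁻¹) ^ 2) /
      (ζ * (ζ - p / q) * (ζ⁻¹ - p / q) * (ζ + p * q) * (ζ⁻¹ + p * q)) := by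
  have hpq : p * q ≠ 0 := mul_ne_zero hp hq
  have hP : 1 + p ^ 2 ≠ 0 := fun h => hp2 (by linear_combination h)
  have h3' : ζ ≠ p * q / -1 := by rwa [div_neg, div_one]
  have h4' : ζ ≠ -1 / (p * q) := by rwa [neg_div]
  have f1 := mul_sub_ne_zero_of_ne_div hq h1
  have f2 := sub_mul_ne_zero_of_ne_div hp h2
  have f3 := sub_mul_ne_zero_of_ne_div (neg_ne_zero.2 one_ne_zero) h3'
  have f4 := mul_sub_ne_zero_of_ne_div hpq h4'
  have add_eq_sub : ∀ x : ℂ, x + 1 / (p * q) = x - -1 / (p * q) := fun x => by ring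
  rw [← neg_mul (p ^ 2 * (q ^ 2 + 1)), mul_sub_inv_sq_div_eq_mul_sq_sub_one_sq_div _ hq hζ,
    neg_inv_sq_div_inv_sub_div_sub_one_div_sub_div hp hq hζ h1 h2, add_eq_sub ζ⁻¹, add_eq_sub ζ,
    neg_inv_sq_div_inv_sub_div_sub_one_div_sub_div (neg_ne_zero.2 one_ne_zero) hpq hζ h4' h3']
  simp only [mul_neg_one, sub_neg_eq_add] at f3 f4 ⊢
  rw [div_mul_div_comm, div_mul_div_comm, div_add_div _ _ hζ (by positivity),
    div_add_div _ _ (by positivity) (by positivity), div_eq_div_iff (by positivity) (by positivity)]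
  ring

/-- The paper's formula (dz1dz) for `dz1/dζ`, where
`z1 = 2q² log ζ + ((q²−p²)/(1+p²)) log((ζ⁻¹−p/q)/(ζ−p/q))
     + ((p²q²−1)/(1+p²)) log((ζ⁻¹+1/(pq))/(ζ+1/(pq)))`
is the homological coordinate `∫_{x1}^{x2} v`: for `ζ` away from
`{0, p/q, q/p, −pq, −1/(pq)}`,
the termwise `ζ`-derivative of `z1` equals
`−p²(q²+1)(ζ−ζ⁻¹)² / (ζ(ζ−p/q)(ζ⁻¹−p/q)(ζ+pq)(ζ⁻¹+pq))`. -/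
theorem dz1_dzeta (p q ζ : ℂ) (hp : p ≠ 0) (hq : q ≠ 0)
    (hp2 : p ^ 2 ≠ -1) (hq2 : q ^ 2 ≠ -1) (hζ : ζ ≠ 0)
    (h1 : ζ ≠ p / q) (h2 : ζ ≠ q / p) (h3 : ζ ≠ -(p * q)) (h4 : ζ ≠ -(1 / (p * q))) :
    2 * q ^ 2 / ζ +
      ((q ^ 2 - p ^ 2) / (1 + p ^ 2)) *
        (-(ζ ^ 2)⁻¹ / (ζ⁻¹ - p / q) - 1 / (ζ - p / q)) +
      ((p ^ 2 * q ^ 2 - 1) / (1 + p ^ 2)) *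
        (-(ζ ^ 2)⁻¹ / (ζ⁻¹ + 1 / (p * q)) - 1 / (ζ + 1 / (p * q))) =
    -(p ^ 2 * (q ^ 2 + 1) * (ζ - ζ⁻¹) ^ 2) /
      (ζ * (ζ - p / q) * (ζ⁻¹ - p / q) * (ζ + p * q) * (ζ⁻¹ + p * q)) :=
  dz1_dzeta_general p q ζ hp hq hp2 hζ h1 h2 h3 h4
end

section
/- Let r1, r2, r3 ∈ ℂ with r3 ≠ 0 and r4 := −(r1+r2+r3) ≠ 0, let t ∈ ℂ \ {0,1}, let s ∈ ℂ satisfy s² = Δ with s ≠ 0, and let x1 = −( r1 + r3 + (r1+r2)t + s )/(2 r4), x2 = −( r1 + r3 + (r1+r2)t − s )/(2 r4) be the two (distinct) zeros of v; assume x1 ≠ t and x2 ≠ t. Then r3 · ( 1/(x1 − t) − 1/(x2 − t) ) = − s / ( t(t−1) ). (Since dz1/dt = ∫_{x1}^{x2} ∂_t v = r3(1/(x1−t) − 1/(x2−t)), this is the paper's formula dz1/dt = −√Δ/(t(t−1)) for the derivative of the homological coordinate z1 = ∫_{x1}^{x2} v.) -/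
/-! Put `y = x - t`. The zeros `yᵢ = xᵢ - t` are the roots `(-b ± s) / (2a)` of the shifted
quadratic, whose leading coefficient is `a = -r4` and whose constant term is the value of
`r1(x-1)(x-t) + r2 x(x-t) + r3 x(x-1)` at `x = t`, namely `c = r3 t (t-1)`. By Vieta,
`y₁ y₂ = c / a` and `y₁ - y₂ = s / a`, so `1/y₁ - 1/y₂ = -s / c`, and multiplying by `r3`
cancels the factor `r3` of `c`. -/

section QuadraticRoots

variable {K : Type*} [Field K] [NeZero (2 : K)] {a b c s : K}

theorem mul_quadratic_roots (ha : a ≠ 0) (hs : s ^ 2 = discrim a b c) :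
    (-b + s) / (2 * a) * ((-b - s) / (2 * a)) = c / a := by
  have h2 : (2 : K) ≠ 0 := two_ne_zero
  rw [discrim] at hs
  field_simp
  linear_combination -hs

theorem sub_quadratic_roots (ha : a ≠ 0) :
    (-b + s) / (2 * a) - (-b - s) / (2 * a) = s / a := by
  have h2 : (2 : K) ≠ 0 := two_ne_zero
  field_simp
  ring

theorem one_div_sub_one_div_quadratic_roots (ha : a ≠ 0) (hs : s ^ 2 = discrim a b c)
    (h₁ : (-b + s) / (2 * a) ≠ 0) (h₂ : (-b - s) / (2 * a) ≠ 0) :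
    1 / ((-b + s) / (2 * a)) - 1 / ((-b - s) / (2 * a)) = -s / c := by
  rw [one_div, one_div, inv_sub_inv h₁ h₂, ← neg_sub, sub_quadratic_roots ha,
    mul_quadratic_roots ha hs, neg_div, neg_div, div_div_div_cancel_right₀ ha]

end QuadraticRoots

theorem dz1_dt_general (r1 r2 r3 r4 t s x1 x2 : ℂ)
    (hr3 : r3 ≠ 0) (hr4 : r4 = -(r1 + r2 + r3)) (hr4ne : r4 ≠ 0)
    (hs2 : s ^ 2 = ((r1 + r2) * t + r1 + r3) ^ 2 + 4 * r1 * r4 * t)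
    (hx1 : x1 = -(r1 + r3 + (r1 + r2) * t + s) / (2 * r4))
    (hx2 : x2 = -(r1 + r3 + (r1 + r2) * t - s) / (2 * r4))
    (hx1t : x1 ≠ t) (hx2t : x2 ≠ t) :
    r3 * (1 / (x1 - t) - 1 / (x2 - t)) = -s / (t * (t - 1)) := by
  set b := -(r1 + r3 + (r1 + r2) * t) - 2 * r4 * t
  have ha : -r4 ≠ 0 := neg_ne_zero.mpr hr4ne
  have hy₁ : x1 - t = (-b + s) / (2 * -r4) := by rw [hx1]; field_simp; ring
  have hy₂ : x2 - t = (-b - s) / (2 * -r4) := by rw [hx2]; field_simp; ring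
  have hdisc : s ^ 2 = discrim (-r4) b (r3 * (t * (t - 1))) := by
    rw [discrim]; linear_combination hs2 - 4 * r4 * t ^ 2 * hr4
  have hy₁ne : (-b + s) / (2 * -r4) ≠ 0 := hy₁ ▸ sub_ne_zero.mpr hx1t
  have hy₂ne : (-b - s) / (2 * -r4) ≠ 0 := hy₂ ▸ sub_ne_zero.mpr hx2t
  rw [hy₁, hy₂, one_div_sub_one_div_quadratic_roots ha hdisc hy₁ne hy₂ne, mul_div_assoc',
    mul_div_mul_left _ _ hr3]

/-- The paper's formula (derDeltat): `dz1/dt = −√Δ/(t(t−1))` for the homological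
coordinate `z1 = ∫_{x1}^{x2} v`. Since `dz1/dt = r3(1/(x1−t) − 1/(x2−t))`,
the claim is `r3(1/(x1−t) − 1/(x2−t)) = −s/(t(t−1))`, where `s² = Δ`,
`x_{1,2} = −(r1 + r3 + (r1+r2)t ± s)/(2 r4)` are the two distinct zeros of `v`. -/
theorem dz1_dt (r1 r2 r3 r4 t s x1 x2 : ℂ)
    (hr3 : r3 ≠ 0) (hr4 : r4 = -(r1 + r2 + r3)) (hr4ne : r4 ≠ 0)
    (ht0 : t ≠ 0) (ht1 : t ≠ 1)
    (hs2 : s ^ 2 = ((r1 + r2) * t + r1 + r3) ^ 2 + 4 * r1 * r4 * t) (hs : s ≠ 0)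
    (hx1 : x1 = -(r1 + r3 + (r1 + r2) * t + s) / (2 * r4))
    (hx2 : x2 = -(r1 + r3 + (r1 + r2) * t - s) / (2 * r4))
    (hx1t : x1 ≠ t) (hx2t : x2 ≠ t) :
    r3 * (1 / (x1 - t) - 1 / (x2 - t)) = -s / (t * (t - 1)) :=
  dz1_dt_general r1 r2 r3 r4 t s x1 x2 hr3 hr4 hr4ne hs2 hx1 hx2 hx1t hx2t
end
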